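/- If the 1-form θ is closed on a W̄₃-manifold (M,P,g), then R(Px,Py,Pz,Pw) = R(x,y,z,w) and ρ(Py,Pz) = ρ(y,z), where ρ is the Ricci tensor. -/

import Mathlib

open scoped BigOperators

/-- An abstract (local) model of a Riemannian almost product manifold of
dimension `n`: `V` plays the role of the module of smooth vector fields over
the commutative ℝ-algebra `C` of smooth functions, `g` is the Riemannian
metric, `P` the almost product structure, `D` the directional derivative of
functions, `bracket` the Lie bracket of vector fields, `nabla` the
Levi-Civita connection of `g`, and `e`, `e'` a frame together with its
`g`-reciprocal frame (used to form traces `g^{ij}·`). -/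
structure RAPM (n : ℕ) where
  V : Type
  C : Type
  [instAG : AddCommGroup V]
  [instCR : CommRing C]
  [instAlg : Algebra ℝ C]
  [instMod : Module C V]
  g : V →ₗ[C] V →ₗ[C] C
  P : V →ₗ[C] V
  gSymm : ∀ x y, g x y = g y x
  Pinvol : ∀ x, P (P x) = x
  Piso : ∀ x y, g (P x) (P y) = g x y
  D : V → C → C
  Dadd : ∀ x f h, D x (f + h) = D x f + D x h
  bracket : V → V → V
  bracketD : ∀ x y f, D (bracket x y) f = D x (D y f) - D y (D x f)
  jacobi : ∀ x y z,
    bracket x (bracket y z) + bracket y (bracket z x) + bracket z (bracket x y) = 0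
  nabla : V → V → V
  nabla_add₁ : ∀ x y z, nabla (x + y) z = nabla x z + nabla y z
  nabla_smul₁ : ∀ (f : C) x y, nabla (f • x) y = f • nabla x y
  nabla_add₂ : ∀ x y z, nabla x (y + z) = nabla x y + nabla x z
  nabla_leibniz : ∀ x (f : C) y, nabla x (f • y) = D x f • y + f • nabla x y
  nabla_metric : ∀ x y z, D x (g y z) = g (nabla x y) z + g y (nabla x z)
  torsion_free : ∀ x y, nabla x y - nabla y x = bracket x y
  e : Fin n → V
  e' : Fin n → V
  dual_frame : ∀ i j, g (e' i) (e j) = if i = j then 1 else 0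
  frame_span : ∀ v : V, v = ∑ i, g (e' i) v • e i

namespace RAPM

attribute [instance] RAPM.instAG RAPM.instCR RAPM.instAlg RAPM.instMod

variable {n : ℕ} (Q : RAPM n)

/-- The fundamental tensor `F(x,y,z) = g((∇ₓP)y, z)`. -/
def F (x y z : Q.V) : Q.C := Q.g (Q.nabla x (Q.P y) - Q.P (Q.nabla x y)) z

/-- The curvature operator `R(x,y)z`. -/
def R (x y z : Q.V) : Q.V :=
  Q.nabla x (Q.nabla y z) - Q.nabla y (Q.nabla x z) - Q.nabla (Q.bracket x y) z

/-- The (0,4) curvature tensor `R(x,y,z,w) = g(R(x,y)z, w)`. -/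
def Rm (x y z w : Q.V) : Q.C := Q.g (Q.R x y z) w

/-- `tr P = g^{ij} g(e_i, P e_j)`. -/
def trP : Q.C := ∑ i, Q.g (Q.e' i) (Q.P (Q.e i))

/-- The Lee form `θ(x) = g^{ij} F(e_i, e_j, x)`. -/
def theta (x : Q.V) : Q.C := ∑ i, Q.F (Q.e' i) (Q.e i) x

/-- The covariant derivative `(∇ₓθ)y`. -/
def nablaTheta (x y : Q.V) : Q.C := Q.D x (Q.theta y) - Q.theta (Q.nabla x y)

/-- `θ` is closed iff `(∇ₓθ)y = (∇_yθ)x`. -/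
def closed : Prop := ∀ x y, Q.nablaTheta x y = Q.nablaTheta y x

/-- The covariant derivative `(∇ₓF)(y,z,w)`. -/
def nablaF (x y z w : Q.V) : Q.C :=
  Q.D x (Q.F y z w) - Q.F (Q.nabla x y) z w - Q.F y (Q.nabla x z) w
    - Q.F y z (Q.nabla x w)

def psi1 (S : Q.V → Q.V → Q.C) (x y z w : Q.V) : Q.C :=
  Q.g y z * S x w - Q.g x z * S y w + S y z * Q.g x w - S x z * Q.g y w

def psi2 (S : Q.V → Q.V → Q.C) (x y z w : Q.V) : Q.C :=
  Q.psi1 S x y (Q.P z) (Q.P w)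

/-- The associated metric `g̃(x,y) = g(x,Py)`. -/
def gP (x y : Q.V) : Q.C := Q.g x (Q.P y)

noncomputable def pi1 (x y z w : Q.V) : Q.C :=
  ((1 : ℝ)/2) • Q.psi1 (fun a b => Q.g a b) x y z w

noncomputable def pi2 (x y z w : Q.V) : Q.C :=
  ((1 : ℝ)/2) • Q.psi2 (fun a b => Q.g a b) x y z w

def pi3 (x y z w : Q.V) : Q.C := Q.psi1 Q.gP x y z w

/-- The Ricci tensor `ρ(L)(y,z) = g^{ij} L(e_i,y,z,e_j)` of a (0,4)-tensor. -/
def ric (L : Q.V → Q.V → Q.V → Q.V → Q.C) (y z : Q.V) : Q.C :=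
  ∑ i, L (Q.e' i) y z (Q.e i)

/-- The scalar curvature `τ(L) = g^{ij} ρ(L)(e_i,e_j)`. -/
def scal (L : Q.V → Q.V → Q.V → Q.V → Q.C) : Q.C := ∑ i, Q.ric L (Q.e i) (Q.e' i)

/-- The associated Ricci tensor `ρ*(L)(y,z) = g^{ij} L(e_i,y,z,Pe_j)`. -/
def ricStar (L : Q.V → Q.V → Q.V → Q.V → Q.C) (y z : Q.V) : Q.C :=
  ∑ i, L (Q.e' i) y z (Q.P (Q.e i))

/-- The associated scalar curvature `τ*(L)`. -/
def scalStar (L : Q.V → Q.V → Q.V → Q.V → Q.C) : Q.C :=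
  ∑ i, Q.ricStar L (Q.e i) (Q.e' i)

/-- The trace `g^{ij} S(e_i,e_j)` of a (0,2)-tensor. -/
def trB (S : Q.V → Q.V → Q.C) : Q.C := ∑ i, S (Q.e i) (Q.e' i)

/-- The divergence of a vector field. -/
def divg (v : Q.V) : Q.C := ∑ i, Q.g (Q.e' i) (Q.nabla (Q.e i) v)

/-- A curvature-like tensor. -/
def curvatureLike (L : Q.V → Q.V → Q.V → Q.V → Q.C) : Prop :=
  (∀ x y z w, L x y z w = - L y x z w) ∧
  (∀ x y z w, L x y z w = - L x y w z) ∧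
  (∀ x y z w, L x y z w + L y z x w + L z x y w = 0)

/-- A Riemannian P-tensor. -/
def isPtensor (L : Q.V → Q.V → Q.V → Q.V → Q.C) : Prop :=
  Q.curvatureLike L ∧ ∀ x y z w, L x y (Q.P z) (Q.P w) = L x y z w

/-- The defining condition of the Naveira class `W̄₃` (dimension `n`, so the
factor `1/(2n)` of the paper is `1/n` here). -/
def W3 : Prop :=
  (∀ x y z, Q.F x y z =
    ((1 : ℝ)/(n : ℝ)) • ((Q.g x y + Q.g x (Q.P y)) * Q.theta z +
      (Q.g x z + Q.g x (Q.P z)) * Q.theta y)) ∧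
  (∀ x, Q.theta (Q.P x) = - Q.theta x)

/-- The defining condition of the Naveira class `W̄₆`. -/
def W6 : Prop :=
  (∀ x y z, Q.F x y z =
    ((1 : ℝ)/(n : ℝ)) • ((Q.g x y - Q.g x (Q.P y)) * Q.theta z +
      (Q.g x z - Q.g x (Q.P z)) * Q.theta y)) ∧
  (∀ x, Q.theta (Q.P x) = Q.theta x)

end RAPM

/-!
The Ricci identity for `P` says that `R(x,y,Pz,Pw) - R(x,y,z,w)` is the skew part
`(∇ₓF)(y,z,Pw) - (∇_yF)(x,z,Pw)` of `∇F`. Applying it to `(Px,Py,z,w)` and to `(z,w,x,y)` and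
using the pair symmetry of `R` writes `R(Px,Py,Pz,Pw) - R(x,y,z,w)` as a sum of two such terms.
On a `W̄₃`-manifold `F` is determined by `g`, `P` and `θ`, so `∇F` is a combination of `F`, `θ`
and `∇θ`. Since `θ ∘ P = -θ`, `(∇θ)(x,Py) = -(∇θ)(x,y) - θ(Ω)/dim M · (g(x,y) + g(x,Py))` with
`Ω` the `g`-dual of `θ`, and closedness of `θ` gives the same rule in the first slot; with these
rules the two terms cancel identically. The statement on `ρ` follows by tracing, since conjugation
by the `g`-symmetric involution `P` preserves traces.
-/

namespace RAPM

variable {m : ℕ} (Q : RAPM m)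

def derivAddHom (x : Q.V) : Q.C →+ Q.C := AddMonoidHom.mk' (Q.D x) (Q.Dadd x)

lemma D_zero (x : Q.V) : Q.D x 0 = 0 := map_zero (Q.derivAddHom x)

lemma D_neg (x : Q.V) (f : Q.C) : Q.D x (-f) = -Q.D x f := map_neg (Q.derivAddHom x) f

def nablaLeft (z : Q.V) : Q.V →ₗ[Q.C] Q.V where
  toFun x := Q.nabla x z
  map_add' x y := Q.nabla_add₁ x y z
  map_smul' f x := Q.nabla_smul₁ f x z

def nablaRight (x : Q.V) : Q.V →+ Q.V := AddMonoidHom.mk' (Q.nabla x) (Q.nabla_add₂ x)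

lemma nabla_sub_left (x y z : Q.V) : Q.nabla (x - y) z = Q.nabla x z - Q.nabla y z :=
  map_sub (Q.nablaLeft z) x y

lemma nabla_sub_right (x y z : Q.V) : Q.nabla x (y - z) = Q.nabla x y - Q.nabla x z :=
  map_sub (Q.nablaRight x) y z

lemma bracket_eq (x y : Q.V) : Q.bracket x y = Q.nabla x y - Q.nabla y x :=
  (Q.torsion_free x y).symm

lemma g_P_left (x y : Q.V) : Q.g (Q.P x) y = Q.g x (Q.P y) := by
  rw [← Q.Piso, Q.Pinvol]

lemma eq_zero_of_add_self_eq_zero {a : Q.C} (h : a + a = 0) : a = 0 := by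
  have h2 : algebraMap ℝ Q.C 2 * a = 0 := by rw [map_ofNat, two_mul, h]
  simpa [← mul_assoc, ← map_mul] using congrArg (algebraMap ℝ Q.C 2⁻¹ * ·) h2

lemma R_swap (x y z : Q.V) : Q.R y x z = -Q.R x y z := by
  simp only [R, Q.bracket_eq, Q.nabla_sub_left]
  abel

lemma R_add_right (x y z z' : Q.V) : Q.R x y (z + z') = Q.R x y z + Q.R x y z' := by
  simp only [R, Q.nabla_add₂]
  abel

/-- Differentiating `g z z` along `[x,y]` in two ways. -/
lemma g_R_self (x y z : Q.V) : Q.g (Q.R x y z) z = 0 := by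
  have hb := Q.bracketD x y (Q.g z z)
  simp only [Q.nabla_metric, Q.Dadd] at hb
  refine Q.eq_zero_of_add_self_eq_zero ?_
  simp only [R, map_sub, LinearMap.sub_apply]
  linear_combination hb.symm - Q.gSymm z (Q.nabla x (Q.nabla y z))
    + Q.gSymm z (Q.nabla y (Q.nabla x z)) + Q.gSymm z (Q.nabla (Q.bracket x y) z)

lemma bianchi (x y z : Q.V) : Q.R x y z + Q.R y z x + Q.R z x y = 0 := by
  have hj := Q.jacobi x y z
  simp only [Q.bracket_eq, Q.nabla_sub_left, Q.nabla_sub_right] at hj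
  simp only [R, Q.bracket_eq, Q.nabla_sub_left]
  rw [← hj]
  abel

lemma curvatureLike_Rm : Q.curvatureLike Q.Rm := by
  refine ⟨fun x y z w => ?_, fun x y z w => ?_, fun x y z w => ?_⟩
  · rw [Rm, Rm, Q.R_swap, map_neg, LinearMap.neg_apply]
  · have h := Q.g_R_self x y (z + w)
    simp only [Q.R_add_right, map_add, LinearMap.add_apply, Q.g_R_self, zero_add,
      add_zero] at h
    simp only [Rm]
    linear_combination h
  · simpa [Rm] using congrArg (Q.g · w) (Q.bianchi x y z)

lemma curvatureLike.pair_symm {L : Q.V → Q.V → Q.V → Q.V → Q.C} (hL : Q.curvatureLike L)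
    (x y z w : Q.V) : L x y z w = L z w x y := by
  obtain ⟨h₁, h₂, hb⟩ := hL
  rw [← sub_eq_zero]
  refine Q.eq_zero_of_add_self_eq_zero ?_
  linear_combination hb x y z w + hb y z w x - hb z w x y - hb w x y z
    - h₁ z x y w - h₂ y z w x - h₂ z w y x - h₁ w y z x + h₂ y w z x
    + h₁ w x z y - h₂ x w z y + h₂ x z w y + h₁ w x y z + h₂ x y w z

lemma bracket_smul_left (f : Q.C) (x y : Q.V) :
    Q.bracket (f • x) y = f • Q.bracket x y - Q.D y f • x := by
  rw [Q.bracket_eq, Q.bracket_eq, Q.nabla_smul₁, Q.nabla_leibniz, smul_sub]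
  abel

lemma R_smul_left (f : Q.C) (x y z : Q.V) : Q.R (f • x) y z = f • Q.R x y z := by
  simp only [R, Q.bracket_smul_left, Q.nabla_sub_left, Q.nabla_smul₁, Q.nabla_leibniz,
    smul_sub]
  abel

lemma R_add_left (x x' y z : Q.V) : Q.R (x + x') y z = Q.R x y z + Q.R x' y z := by
  simp only [R, Q.bracket_eq, Q.nabla_sub_left, Q.nabla_add₁, Q.nabla_add₂]
  abel

def RmBilin (y z : Q.V) : Q.V →ₗ[Q.C] Q.V →ₗ[Q.C] Q.C :=
  LinearMap.mk₂ Q.C (fun x w => Q.Rm x y z w)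
    (fun x x' w => by simp only [Rm, Q.R_add_left, map_add, LinearMap.add_apply])
    (fun f x w => by simp only [Rm, Q.R_smul_left, map_smul, LinearMap.smul_apply])
    (fun x w w' => map_add _ w w')
    (fun f x w => map_smul _ f w)

lemma sum_frame_swap (L : Q.V →ₗ[Q.C] Q.V →ₗ[Q.C] Q.C) (A : Q.V →ₗ[Q.C] Q.V)
    (hA : ∀ u v, Q.g (A u) v = Q.g u (A v)) :
    ∑ i, L (A (Q.e' i)) (Q.e i) = ∑ i, L (Q.e i) (A (Q.e' i)) := by
  have hcoef : ∀ i k, Q.g (Q.e' k) (A (Q.e' i)) = Q.g (Q.e' i) (A (Q.e' k)) := fun i k => by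
    rw [← hA, Q.gSymm]
  calc ∑ i, L (A (Q.e' i)) (Q.e i)
      = ∑ i, ∑ k, Q.g (Q.e' i) (A (Q.e' k)) * L (Q.e k) (Q.e i) := by
        refine Finset.sum_congr rfl fun i _ => ?_
        conv_lhs => rw [Q.frame_span (A (Q.e' i))]
        simp only [map_sum, map_smul, LinearMap.sum_apply, LinearMap.smul_apply, smul_eq_mul,
          hcoef i]
    _ = ∑ k, L (Q.e k) (A (Q.e' k)) := by
        rw [Finset.sum_comm]
        refine Finset.sum_congr rfl fun k _ => ?_
        conv_rhs => rw [Q.frame_span (A (Q.e' k))]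
        simp only [map_sum, map_smul, smul_eq_mul]

lemma sum_P_frame (L : Q.V →ₗ[Q.C] Q.V →ₗ[Q.C] Q.C) :
    ∑ i, L (Q.P (Q.e' i)) (Q.P (Q.e i)) = ∑ i, L (Q.e' i) (Q.e i) := by
  have hP := Q.sum_frame_swap (L.compl₂ Q.P) Q.P Q.g_P_left
  have hid := Q.sum_frame_swap L LinearMap.id fun _ _ => rfl
  simp only [LinearMap.compl₂_apply, Q.Pinvol, LinearMap.id_apply] at hP hid
  rw [hP, hid]

lemma ric_Rm_P_P (h : ∀ x y z w, Q.Rm (Q.P x) (Q.P y) (Q.P z) (Q.P w) = Q.Rm x y z w)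
    (y z : Q.V) : Q.ric Q.Rm (Q.P y) (Q.P z) = Q.ric Q.Rm y z := by
  calc Q.ric Q.Rm (Q.P y) (Q.P z)
      = ∑ i, Q.RmBilin y z (Q.P (Q.e' i)) (Q.P (Q.e i)) := by
        refine Finset.sum_congr rfl fun i _ => ?_
        rw [← h, Q.Pinvol, Q.Pinvol]
        rfl
    _ = Q.ric Q.Rm y z := Q.sum_P_frame (Q.RmBilin y z)

lemma D_mul_g (x : Q.V) (f : Q.C) (u v : Q.V) :
    Q.D x (f * Q.g u v) = Q.D x f * Q.g u v + f * Q.D x (Q.g u v) := by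
  have h := Q.nabla_metric x (f • u) v
  simp only [Q.nabla_leibniz, map_smul, map_add, LinearMap.smul_apply, LinearMap.add_apply,
    smul_eq_mul] at h
  rw [h, Q.nabla_metric]
  ring

noncomputable def invDim : Q.C := algebraMap ℝ Q.C ((1 : ℝ) / (m : ℝ))

lemma D_invDim (x : Q.V) : Q.D x Q.invDim = 0 := by
  rcases Nat.eq_zero_or_pos m with rfl | hm
  · simp [invDim, Q.D_zero]
  have hone : Q.D x 1 = 0 := by
    have h := Q.D_mul_g x 1 (Q.e' ⟨0, hm⟩) (Q.e ⟨0, hm⟩)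
    simp only [Q.dual_frame, if_true, one_mul, mul_one] at h
    exact right_eq_add.mp h
  have hmk : (m : Q.C) * Q.invDim = 1 := by
    rw [invDim, ← map_natCast (algebraMap ℝ Q.C), ← map_mul,
      mul_one_div_cancel (Nat.cast_ne_zero.mpr hm.ne'), map_one]
  have hm_mul : (m : Q.C) * Q.D x Q.invDim = 0 := by
    have h := map_nsmul (Q.derivAddHom x) m Q.invDim
    rw [nsmul_eq_mul, nsmul_eq_mul, hmk] at h
    exact h.symm.trans hone
  calc Q.D x Q.invDim = (Q.invDim * m) * Q.D x Q.invDim := by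
        rw [mul_comm Q.invDim, hmk, one_mul]
    _ = 0 := by rw [mul_assoc, hm_mul, mul_zero]

lemma D_invDim_mul_g_mul_g (x a b c d : Q.V) :
    Q.D x (Q.invDim * (Q.g a b * Q.g c d)) =
      Q.invDim * (Q.D x (Q.g a b) * Q.g c d + Q.g a b * Q.D x (Q.g c d)) := by
  rw [← mul_assoc, Q.D_mul_g, Q.D_mul_g, Q.D_invDim]
  ring

def nablaP (x y : Q.V) : Q.V := Q.nabla x (Q.P y) - Q.P (Q.nabla x y)

lemma nabla_P (x y : Q.V) : Q.nabla x (Q.P y) = Q.nablaP x y + Q.P (Q.nabla x y) := by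
  rw [nablaP, sub_add_cancel]

lemma F_eq_g (x y z : Q.V) : Q.F x y z = Q.g (Q.nablaP x y) z := rfl

lemma nablaF_eq (x u z w : Q.V) : Q.nablaF x u z w =
    Q.g (Q.nabla x (Q.nablaP u z) - Q.nablaP (Q.nabla x u) z - Q.nablaP u (Q.nabla x z)) w := by
  simp only [nablaF, F_eq_g, Q.nabla_metric x (Q.nablaP u z) w, map_sub,
    LinearMap.sub_apply]
  ring

lemma ricci_identity_P (x y z : Q.V) :
    (Q.nabla x (Q.nablaP y z) - Q.nablaP (Q.nabla x y) z - Q.nablaP y (Q.nabla x z))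
      - (Q.nabla y (Q.nablaP x z) - Q.nablaP (Q.nabla y x) z - Q.nablaP x (Q.nabla y z))
    = Q.R x y (Q.P z) - Q.P (Q.R x y z) := by
  simp only [nablaP, R, Q.nabla_sub_right, Q.bracket_eq, Q.nabla_sub_left, map_sub]
  abel

def skewNablaF (x y z w : Q.V) : Q.C := Q.nablaF x y z (Q.P w) - Q.nablaF y x z (Q.P w)

lemma Rm_P_P (x y z w : Q.V) :
    Q.Rm x y (Q.P z) (Q.P w) = Q.Rm x y z w + Q.skewNablaF x y z w := by
  have h := congrArg (Q.g · (Q.P w)) (Q.ricci_identity_P x y z)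
  simp only [map_sub, LinearMap.sub_apply] at h
  rw [skewNablaF, Q.nablaF_eq, Q.nablaF_eq, Rm, Rm, ← Q.Piso (Q.R x y z) w]
  simp only [map_sub, LinearMap.sub_apply]
  linear_combination -h

def gPlus (x y : Q.V) : Q.C := Q.g x (y + Q.P y)

def leeVector : Q.V := ∑ i, Q.nablaP (Q.e' i) (Q.e i)

lemma theta_eq_g (w : Q.V) : Q.theta w = Q.g Q.leeVector w := by
  simp only [theta, F_eq_g, leeVector, map_sum, LinearMap.sum_apply]

lemma theta_add (u v : Q.V) : Q.theta (u + v) = Q.theta u + Q.theta v := by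
  simp only [theta_eq_g, map_add]

lemma gPlus_symm (x y : Q.V) : Q.gPlus x y = Q.gPlus y x := by
  rw [gPlus, gPlus, map_add, map_add, Q.gSymm x y, Q.gSymm x (Q.P y), Q.g_P_left]

lemma gPlus_P_right (x y : Q.V) : Q.gPlus x (Q.P y) = Q.gPlus x y := by
  rw [gPlus, gPlus, Q.Pinvol, add_comm]

lemma gPlus_P_left (x y : Q.V) : Q.gPlus (Q.P x) y = Q.gPlus x y := by
  rw [Q.gPlus_symm, Q.gPlus_P_right, Q.gPlus_symm]

lemma D_gPlus (x u z : Q.V) :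
    Q.D x (Q.gPlus u z) = Q.gPlus (Q.nabla x u) z + Q.gPlus u (Q.nabla x z) + Q.F x z u := by
  rw [gPlus, Q.nabla_metric, Q.nabla_add₂, Q.nabla_P, F_eq_g, Q.gSymm (Q.nablaP x z)]
  simp only [gPlus, map_add]
  ring

section W3

variable {Q} (hW : Q.W3)
include hW

lemma F_eq_of_W3 (x y z : Q.V) :
    Q.F x y z = Q.invDim * (Q.gPlus x y * Q.theta z + Q.gPlus x z * Q.theta y) := by
  rw [hW.1, Algebra.smul_def, gPlus, gPlus, map_add, map_add]
  rfl

lemma gPlus_leeVector (x : Q.V) : Q.gPlus x Q.leeVector = 0 := by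
  rw [gPlus, map_add, Q.gSymm, ← theta_eq_g, ← Q.g_P_left, Q.gSymm, ← theta_eq_g, hW.2,
    add_neg_cancel]

lemma theta_nablaP (x y : Q.V) :
    Q.theta (Q.nablaP x y) = Q.invDim * Q.theta Q.leeVector * Q.gPlus x y := by
  rw [theta_eq_g, Q.gSymm, ← F_eq_g, F_eq_of_W3 hW, gPlus_leeVector hW]
  ring

lemma nablaTheta_P_right (x y : Q.V) : Q.nablaTheta x (Q.P y) =
    -Q.nablaTheta x y - Q.invDim * Q.theta Q.leeVector * Q.gPlus x y := by
  rw [nablaTheta, nablaTheta, hW.2, Q.D_neg, Q.nabla_P, theta_add, theta_nablaP hW, hW.2]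
  ring

lemma nablaTheta_P_left (hθ : Q.closed) (x y : Q.V) : Q.nablaTheta (Q.P x) y =
    -Q.nablaTheta x y - Q.invDim * Q.theta Q.leeVector * Q.gPlus x y := by
  rw [hθ, nablaTheta_P_right hW, hθ, Q.gPlus_symm]

lemma nablaF_of_W3 (x u z w : Q.V) :
    Q.nablaF x u z w = Q.invDim * (Q.F x z u * Q.theta w + Q.F x w u * Q.theta z
      + Q.gPlus u z * Q.nablaTheta x w + Q.gPlus u w * Q.nablaTheta x z) := by
  have hD : ∀ a b c, Q.D x (Q.invDim * (Q.gPlus a b * Q.theta c)) = Q.invDim *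
      (Q.D x (Q.gPlus a b) * Q.theta c
        + Q.gPlus a b * (Q.nablaTheta x c + Q.theta (Q.nabla x c))) :=
    fun a b c => by
      rw [gPlus, theta_eq_g, Q.D_invDim_mul_g_mul_g, ← theta_eq_g, nablaTheta,
        sub_add_cancel]
  rw [nablaF, F_eq_of_W3 hW u z w, F_eq_of_W3 hW (Q.nabla x u) z w,
    F_eq_of_W3 hW u (Q.nabla x z) w, F_eq_of_W3 hW u z (Q.nabla x w), mul_add, Q.Dadd, hD, hD,
    Q.D_gPlus, Q.D_gPlus]
  ring

lemma skewNablaF_P_P_add (hθ : Q.closed) (x y z w : Q.V) :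
    Q.skewNablaF (Q.P x) (Q.P y) z w + Q.skewNablaF z w x y = 0 := by
  simp only [skewNablaF, nablaF_of_W3 hW, F_eq_of_W3 hW, hW.2, Q.gPlus_P_left, Q.gPlus_P_right,
    nablaTheta_P_left hW hθ, nablaTheta_P_right hW]
  rw [Q.gPlus_symm y x, Q.gPlus_symm z x, Q.gPlus_symm z y, Q.gPlus_symm w x, Q.gPlus_symm w y,
    Q.gPlus_symm w z, hθ z x, hθ z y, hθ w x, hθ w y]
  ring

lemma Rm_P_P_P_P (hθ : Q.closed) (x y z w : Q.V) :
    Q.Rm (Q.P x) (Q.P y) (Q.P z) (Q.P w) = Q.Rm x y z w := by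
  have hpair := Q.curvatureLike_Rm.pair_symm
  linear_combination Q.Rm_P_P (Q.P x) (Q.P y) z w + hpair (Q.P x) (Q.P y) z w
    + Q.Rm_P_P z w x y + hpair z w x y + skewNablaF_P_P_add hW hθ x y z w

end W3

end RAPM

open RAPM in
theorem statement11_general {n : ℕ} (Q : RAPM (2*n))
    (hW : Q.W3) (hθ : Q.closed) :
    (∀ x y z w,
      Q.Rm (Q.P x) (Q.P y) (Q.P z) (Q.P w) = Q.Rm x y z w) ∧
    (∀ y z, Q.ric Q.Rm (Q.P y) (Q.P z) = Q.ric Q.Rm y z) :=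
  ⟨Rm_P_P_P_P hW hθ, Q.ric_Rm_P_P (Rm_P_P_P_P hW hθ)⟩

open RAPM in
/-- On a `W̄₃`-manifold with closed `θ`,
`R(Px,Py,Pz,Pw) = R(x,y,z,w)` and `ρ(Py,Pz) = ρ(y,z)`. -/
theorem statement11 {n : ℕ} (hn : 0 < n) (Q : RAPM (2*n)) (htr : Q.trP = 0)
    (hW : Q.W3) (hθ : Q.closed) :
    (∀ x y z w,
      Q.Rm (Q.P x) (Q.P y) (Q.P z) (Q.P w) = Q.Rm x y z w) ∧
    (∀ y z, Q.ric Q.Rm (Q.P y) (Q.P z) = Q.ric Q.Rm y z) :=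
  statement11_general Q hW hθ
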